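/- Let (B¹, i¹, j¹) and (B², i², j²) be framed representations on (V¹, W¹) and (V², W²) with μ(B¹, i¹, j¹) = 0 and μ(B², i², j²) = 0. Consider the bilinear pairing ω between E(V¹,V²) ⊕ L(W¹,V²) ⊕ L(V¹,W²) and E(V²,V¹) ⊕ L(W²,V¹) ⊕ L(V²,W¹) given by ω((C,I,J),(C′,I′,J′)) = ∑_{h∈H} ε(h) tr(C_h C′_{h̄}) + ∑_{k∈I} (tr(I_k J′_k) − tr(I′_k J_k)). Then ω vanishes on Im α²¹ × Ker β¹² and on Ker β²¹ × Im α¹², and the induced pairing (Ker β²¹ / Im α²¹) × (Ker β¹² / Im α¹²) → ℂ is nondegenerate; that is, Ker β²¹/Im α²¹ and Ker β¹²/Im α¹² are dual to each other with respect to ω. -/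
import Mathlib


/-!
Framed representations of a quiver attached to a finite graph without edge
loops, with vertex set `I` and edge set `Ω`, where the edge `e ∈ Ω` joins the
vertices `s e` and `t e`.  The set `H` of oriented edges is `Ω ⊕ Ω`: each
edge occurs with both orientations.  For an `I`-graded complex vector space
`V`, a datum `B ∈ E(V,V)` is encoded by its components `Bp e : V (s e) → V (t e)`
(along `e` oriented from `s e` to `t e`) and `Bm e : V (t e) → V (s e)` (along
the reversed orientation); a datum in `L(V,W)` is a family of maps
`V k → W k`.
-/

noncomputable section

variable {I : Type*} {Ω : Type*}

/-- A framed representation `(B, i, j) ∈ E(V,V) ⊕ L(W,V) ⊕ L(V,W)` on the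
pair `(V, W)` of `I`-graded vector spaces. -/
structure FramedRep (s t : Ω → I) (V W : I → Type*)
    [∀ k, AddCommGroup (V k)] [∀ k, Module ℂ (V k)]
    [∀ k, AddCommGroup (W k)] [∀ k, Module ℂ (W k)] where
  Bp : ∀ e, V (s e) →ₗ[ℂ] V (t e)
  Bm : ∀ e, V (t e) →ₗ[ℂ] V (s e)
  i : ∀ k, W k →ₗ[ℂ] V k
  j : ∀ k, V k →ₗ[ℂ] W k

/-- Stability: the only `B`-invariant `I`-graded subspace `S ⊆ V` contained
in `Ker j` is `S = 0`. -/
def FramedRep.IsStable {s t : Ω → I} {V W : I → Type*}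
    [∀ k, AddCommGroup (V k)] [∀ k, Module ℂ (V k)]
    [∀ k, AddCommGroup (W k)] [∀ k, Module ℂ (W k)]
    (R : FramedRep s t V W) : Prop :=
  ∀ S : ∀ k, Submodule ℂ (V k),
    (∀ e, ∀ x ∈ S (s e), R.Bp e x ∈ S (t e)) →
    (∀ e, ∀ x ∈ S (t e), R.Bm e x ∈ S (s e)) →
    (∀ k, ∀ x ∈ S k, R.j k x = 0) →
    ∀ k, S k = ⊥

/-- Transport of graded components along an equality of vertices. -/
def lcast (V : I → Type*) [∀ k, AddCommGroup (V k)] [∀ k, Module ℂ (V k)]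
    {a b : I} (h : a = b) : V a →ₗ[ℂ] V b := by
  subst h; exact LinearMap.id

section

variable {s t : Ω → I}
variable {V₁ W₁ V₂ W₂ : I → Type*}
  [∀ k, AddCommGroup (V₁ k)] [∀ k, Module ℂ (V₁ k)]
  [∀ k, AddCommGroup (W₁ k)] [∀ k, Module ℂ (W₁ k)]
  [∀ k, AddCommGroup (V₂ k)] [∀ k, Module ℂ (V₂ k)]
  [∀ k, AddCommGroup (W₂ k)] [∀ k, Module ℂ (W₂ k)]

/-- The vanishing of the moment map, `μ(B,i,j) = εBB + ij = 0`: for every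
vertex `k`, `∑_{h : in(h) = k} ε(h) B_h B_h̄ + i_k j_k = 0`, where the sum over
oriented edges `h` into `k` splits into the edges `e` with `t e = k` (with
sign `eps e`) and those with `s e = k` (with sign `−eps e`). -/
def FramedRep.MuZero [Fintype Ω] [DecidableEq I] (eps : Ω → ℂ)
    {V W : I → Type*}
    [∀ k, AddCommGroup (V k)] [∀ k, Module ℂ (V k)]
    [∀ k, AddCommGroup (W k)] [∀ k, Module ℂ (W k)]
    (R : FramedRep s t V W) : Prop :=
  ∀ k : I,
    (∑ e : {e : Ω // t e = k},
        eps e.1 • (lcast V e.2 ∘ₗ R.Bp e.1 ∘ₗ R.Bm e.1 ∘ₗ lcast V e.2.symm))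
    + (∑ e : {e : Ω // s e = k},
        (-eps e.1) • (lcast V e.2 ∘ₗ R.Bm e.1 ∘ₗ R.Bp e.1 ∘ₗ lcast V e.2.symm))
    + R.i k ∘ₗ R.j k = 0

/-- The space `E(V¹,V²) ⊕ L(W¹,V²) ⊕ L(V¹,W²)`, middle term of the complex
`L(V¹,V²) → E(V¹,V²) ⊕ L(W¹,V²) ⊕ L(V¹,W²) → L(V¹,V²)`. -/
abbrev ELL (s t : Ω → I) (V₁ W₁ V₂ W₂ : I → Type*)
    [∀ k, AddCommGroup (V₁ k)] [∀ k, Module ℂ (V₁ k)]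
    [∀ k, AddCommGroup (W₁ k)] [∀ k, Module ℂ (W₁ k)]
    [∀ k, AddCommGroup (V₂ k)] [∀ k, Module ℂ (V₂ k)]
    [∀ k, AddCommGroup (W₂ k)] [∀ k, Module ℂ (W₂ k)] : Type _ :=
  (∀ e, V₁ (s e) →ₗ[ℂ] V₂ (t e)) × (∀ e, V₁ (t e) →ₗ[ℂ] V₂ (s e)) ×
  (∀ k, W₁ k →ₗ[ℂ] V₂ k) × (∀ k, V₁ k →ₗ[ℂ] W₂ k)

/-- The map `α²¹ : L(V¹,V²) → E(V¹,V²) ⊕ L(W¹,V²) ⊕ L(V¹,W²)`,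
`α²¹(ξ) = (B²ξ − ξB¹, −ξi¹, j²ξ)`. -/
def alphaMap (R₁ : FramedRep s t V₁ W₁) (R₂ : FramedRep s t V₂ W₂)
    (ξ : ∀ k, V₁ k →ₗ[ℂ] V₂ k) : ELL s t V₁ W₁ V₂ W₂ :=
  ⟨fun e => R₂.Bp e ∘ₗ ξ (s e) - ξ (t e) ∘ₗ R₁.Bp e,
   fun e => R₂.Bm e ∘ₗ ξ (t e) - ξ (s e) ∘ₗ R₁.Bm e,
   fun k => -(ξ k ∘ₗ R₁.i k),
   fun k => R₂.j k ∘ₗ ξ k⟩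

/-- The `k`-th component of the map
`β²¹ : E(V¹,V²) ⊕ L(W¹,V²) ⊕ L(V¹,W²) → L(V¹,V²)`,
`β²¹(C,I,J)_k = ∑_{h : in(h)=k} ε(h)(B²_h C_h̄ + C_h B¹_h̄) + i²_k J_k + I_k j¹_k`,
where the sum over oriented edges `h` into `k` splits into the edges `e` with
`t e = k` (with sign `eps e`) and those with `s e = k` (with sign `−eps e`). -/
def betaMap [Fintype Ω] [DecidableEq I] (eps : Ω → ℂ)
    (R₁ : FramedRep s t V₁ W₁) (R₂ : FramedRep s t V₂ W₂)
    (x : ELL s t V₁ W₁ V₂ W₂) (k : I) : V₁ k →ₗ[ℂ] V₂ k :=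
  (∑ e : {e : Ω // t e = k},
      eps e.1 • (lcast V₂ e.2 ∘ₗ (R₂.Bp e.1 ∘ₗ x.2.1 e.1 + x.1 e.1 ∘ₗ R₁.Bm e.1)
        ∘ₗ lcast V₁ e.2.symm))
  + (∑ e : {e : Ω // s e = k},
      (-eps e.1) • (lcast V₂ e.2 ∘ₗ (R₂.Bm e.1 ∘ₗ x.1 e.1 + x.2.1 e.1 ∘ₗ R₁.Bp e.1)
        ∘ₗ lcast V₁ e.2.symm))
  + R₂.i k ∘ₗ x.2.2.2 k + x.2.2.1 k ∘ₗ R₁.j k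

end

/-- The pairing `ω` between `E(V¹,V²) ⊕ L(W¹,V²) ⊕ L(V¹,W²)` and
`E(V²,V¹) ⊕ L(W²,V¹) ⊕ L(V²,W¹)`:
`ω((C,I,J),(C′,I′,J′)) = ∑_{h ∈ H} ε(h) tr(C_h C′_h̄)
  + ∑_k (tr(I_k J′_k) − tr(I′_k J_k))`,
where the sum over oriented edges `h` splits into the original orientations
(sign `eps e`) and the reversed ones (sign `−eps e`). -/
def omegaForm {s t : Ω → I} [Fintype Ω] [Fintype I] (eps : Ω → ℂ)
    {V₁ W₁ V₂ W₂ : I → Type*}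
    [∀ k, AddCommGroup (V₁ k)] [∀ k, Module ℂ (V₁ k)]
    [∀ k, AddCommGroup (W₁ k)] [∀ k, Module ℂ (W₁ k)]
    [∀ k, AddCommGroup (V₂ k)] [∀ k, Module ℂ (V₂ k)]
    [∀ k, AddCommGroup (W₂ k)] [∀ k, Module ℂ (W₂ k)]
    (x : ELL s t V₁ W₁ V₂ W₂) (y : ELL s t V₂ W₂ V₁ W₁) : ℂ :=
  (∑ e : Ω, eps e * LinearMap.trace ℂ (V₂ (t e)) (x.1 e ∘ₗ y.2.1 e))
  + (∑ e : Ω, (-eps e) * LinearMap.trace ℂ (V₂ (s e)) (x.2.1 e ∘ₗ y.1 e))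
  + ∑ k : I, (LinearMap.trace ℂ (V₂ k) (x.2.2.1 k ∘ₗ y.2.2.2 k)
      - LinearMap.trace ℂ (V₁ k) (y.2.2.1 k ∘ₗ x.2.2.2 k))

/-! ### Auxiliary lemmas for the duality theorem -/

section AuxDuality

open LinearMap

/-- `lcast` along any self-equality is the identity. -/
lemma lcast_refl (V : I → Type*) [∀ k, AddCommGroup (V k)] [∀ k, Module ℂ (V k)]
    {a : I} (h : a = a) : lcast V h = LinearMap.id := rfl

/-- The functional `g ↦ tr (f ∘ g)`, as a linear map. -/
def trL {A B : Type*} [AddCommGroup A] [Module ℂ A] [AddCommGroup B] [Module ℂ B]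
    (f : A →ₗ[ℂ] B) : (B →ₗ[ℂ] A) →ₗ[ℂ] ℂ :=
  (LinearMap.trace ℂ B) ∘ₗ (LinearMap.llcomp ℂ B A B f)

@[simp] lemma trL_apply {A B : Type*} [AddCommGroup A] [Module ℂ A]
    [AddCommGroup B] [Module ℂ B] (f : A →ₗ[ℂ] B) (g : B →ₗ[ℂ] A) :
    trL f g = LinearMap.trace ℂ B (f ∘ₗ g) := rfl

/-- Nondegeneracy of the trace pairing, variable on the left. -/
lemma trace_comp_eq_zero_left {A B : Type*} [AddCommGroup A] [Module ℂ A]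
    [FiniteDimensional ℂ A] [AddCommGroup B] [Module ℂ B] [FiniteDimensional ℂ B]
    {g : B →ₗ[ℂ] A} (h : ∀ f : A →ₗ[ℂ] B, LinearMap.trace ℂ B (f ∘ₗ g) = 0) : g = 0 := by
  ext b
  simp only [LinearMap.zero_apply]
  rw [← Module.forall_dual_apply_eq_zero_iff ℂ]
  intro φ
  have h1 : (dualTensorHom ℂ A B (φ ⊗ₜ[ℂ] b)) ∘ₗ g = dualTensorHom ℂ B B ((φ ∘ₗ g) ⊗ₜ[ℂ] b) := by
    ext x; simp [dualTensorHom_apply]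
  have h2 := h (dualTensorHom ℂ A B (φ ⊗ₜ[ℂ] b))
  rw [h1, trace_eq_contract_apply, contractLeft_apply] at h2
  simpa using h2

/-- Nondegeneracy of the trace pairing, variable on the right. -/
lemma trace_comp_eq_zero_right {A B : Type*} [AddCommGroup A] [Module ℂ A]
    [FiniteDimensional ℂ A] [AddCommGroup B] [Module ℂ B] [FiniteDimensional ℂ B]
    {g : B →ₗ[ℂ] A} (h : ∀ f : A →ₗ[ℂ] B, LinearMap.trace ℂ A (g ∘ₗ f) = 0) : g = 0 :=
  trace_comp_eq_zero_left fun f => by rw [← trace_comp_comm' f g]; exact h f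

/-- Nondegeneracy of the graded trace pairing. -/
lemma pi_trace_nondeg [Fintype I] [DecidableEq I] {P Q : I → Type*}
    [∀ k, AddCommGroup (P k)] [∀ k, Module ℂ (P k)] [∀ k, FiniteDimensional ℂ (P k)]
    [∀ k, AddCommGroup (Q k)] [∀ k, Module ℂ (Q k)] [∀ k, FiniteDimensional ℂ (Q k)]
    {g : ∀ k, Q k →ₗ[ℂ] P k}
    (h : ∀ ξ : ∀ k, P k →ₗ[ℂ] Q k, ∑ k, LinearMap.trace ℂ (Q k) (ξ k ∘ₗ g k) = 0) :
    ∀ k, g k = 0 := by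
  intro k₀
  apply trace_comp_eq_zero_left
  intro f
  have h2 := h (Function.update (fun k => 0) k₀ f)
  rwa [Finset.sum_eq_single k₀ (fun b _ hb => by rw [Function.update_of_ne hb]; simp)
    (by simp), Function.update_self] at h2

end AuxDuality

section AuxDuality2

open LinearMap

variable {A₁ B₁ A₂ B₂ : Type*}
  [AddCommGroup A₁] [Module ℂ A₁] [FiniteDimensional ℂ A₁]
  [AddCommGroup B₁] [Module ℂ B₁] [FiniteDimensional ℂ B₁]
  [AddCommGroup A₂] [Module ℂ A₂] [FiniteDimensional ℂ A₂]
  [AddCommGroup B₂] [Module ℂ B₂] [FiniteDimensional ℂ B₂]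

lemma edgeA (c : ℂ) (ξs : A₁ →ₗ[ℂ] A₂) (ξt : B₁ →ₗ[ℂ] B₂) (p1 : A₁ →ₗ[ℂ] B₁)
    (m1 : B₁ →ₗ[ℂ] A₁) (p2 : A₂ →ₗ[ℂ] B₂) (m2 : B₂ →ₗ[ℂ] A₂)
    (cp : A₂ →ₗ[ℂ] B₁) (cm : B₂ →ₗ[ℂ] A₁) :
    c * LinearMap.trace ℂ B₂ ((p2 ∘ₗ ξs - ξt ∘ₗ p1) ∘ₗ cm)
      + (-c) * LinearMap.trace ℂ A₂ ((m2 ∘ₗ ξt - ξs ∘ₗ m1) ∘ₗ cp)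
    = -(c * LinearMap.trace ℂ B₂ (ξt ∘ₗ (p1 ∘ₗ cm + cp ∘ₗ m2)))
      + -((-c) * LinearMap.trace ℂ A₂ (ξs ∘ₗ (m1 ∘ₗ cp + cm ∘ₗ p2))) := by
  have h1 : LinearMap.trace ℂ B₂ (p2 ∘ₗ (ξs ∘ₗ cm)) = LinearMap.trace ℂ A₂ ((ξs ∘ₗ cm) ∘ₗ p2) :=
    trace_comp_comm' (ξs ∘ₗ cm) p2
  have h2 : LinearMap.trace ℂ A₂ (m2 ∘ₗ (ξt ∘ₗ cp)) = LinearMap.trace ℂ B₂ ((ξt ∘ₗ cp) ∘ₗ m2) :=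
    trace_comp_comm' (ξt ∘ₗ cp) m2
  rw [comp_assoc] at h1 h2
  simp only [sub_comp, comp_add, map_sub, map_add, comp_assoc]
  linear_combination c * h1 - c * h2

lemma edgeB (c : ℂ) (ηs : A₂ →ₗ[ℂ] A₁) (ηt : B₂ →ₗ[ℂ] B₁) (p1 : A₁ →ₗ[ℂ] B₁)
    (m1 : B₁ →ₗ[ℂ] A₁) (p2 : A₂ →ₗ[ℂ] B₂) (m2 : B₂ →ₗ[ℂ] A₂)
    (xCp : A₁ →ₗ[ℂ] B₂) (xCm : B₁ →ₗ[ℂ] A₂) :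
    c * LinearMap.trace ℂ B₂ (xCp ∘ₗ (m1 ∘ₗ ηt - ηs ∘ₗ m2))
      + (-c) * LinearMap.trace ℂ A₂ (xCm ∘ₗ (p1 ∘ₗ ηs - ηt ∘ₗ p2))
    = c * LinearMap.trace ℂ B₁ (ηt ∘ₗ (p2 ∘ₗ xCm + xCp ∘ₗ m1))
      + (-c) * LinearMap.trace ℂ A₁ (ηs ∘ₗ (m2 ∘ₗ xCp + xCm ∘ₗ p1)) := by
  have h1 : LinearMap.trace ℂ B₂ (xCp ∘ₗ (m1 ∘ₗ ηt)) = LinearMap.trace ℂ B₁ (ηt ∘ₗ (xCp ∘ₗ m1)) :=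
    (trace_comp_cycle m1 xCp ηt).trans (trace_comp_cycle ηt m1 xCp)
  have h2 : LinearMap.trace ℂ B₂ (xCp ∘ₗ (ηs ∘ₗ m2)) = LinearMap.trace ℂ A₁ ((ηs ∘ₗ m2) ∘ₗ xCp) :=
    trace_comp_comm' (ηs ∘ₗ m2) xCp
  have h3 : LinearMap.trace ℂ A₂ (xCm ∘ₗ (p1 ∘ₗ ηs)) = LinearMap.trace ℂ A₁ (ηs ∘ₗ (xCm ∘ₗ p1)) :=
    (trace_comp_cycle p1 xCm ηs).trans (trace_comp_cycle ηs p1 xCm)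
  have h4 : LinearMap.trace ℂ A₂ (xCm ∘ₗ (ηt ∘ₗ p2)) = LinearMap.trace ℂ B₁ ((ηt ∘ₗ p2) ∘ₗ xCm) :=
    trace_comp_comm' (ηt ∘ₗ p2) xCm
  rw [comp_assoc] at h2 h4
  simp only [comp_sub, comp_add, map_sub, map_add]
  linear_combination c * h1 - c * h2 - c * h3 + c * h4

lemma framingA {Va Vb Wa Wb : Type*}
    [AddCommGroup Va] [Module ℂ Va] [FiniteDimensional ℂ Va]
    [AddCommGroup Vb] [Module ℂ Vb] [FiniteDimensional ℂ Vb]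
    [AddCommGroup Wa] [Module ℂ Wa] [FiniteDimensional ℂ Wa]
    [AddCommGroup Wb] [Module ℂ Wb] [FiniteDimensional ℂ Wb]
    (ξ : Va →ₗ[ℂ] Vb) (i1 : Wa →ₗ[ℂ] Va) (j2 : Vb →ₗ[ℂ] Wb)
    (yI : Wb →ₗ[ℂ] Va) (yJ : Vb →ₗ[ℂ] Wa) :
    LinearMap.trace ℂ Vb ((-(ξ ∘ₗ i1)) ∘ₗ yJ) - LinearMap.trace ℂ Va (yI ∘ₗ (j2 ∘ₗ ξ))
    = -(LinearMap.trace ℂ Vb (ξ ∘ₗ (i1 ∘ₗ yJ)) + LinearMap.trace ℂ Vb (ξ ∘ₗ (yI ∘ₗ j2))) := by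
  have h : LinearMap.trace ℂ Va ((yI ∘ₗ j2) ∘ₗ ξ) = LinearMap.trace ℂ Vb (ξ ∘ₗ (yI ∘ₗ j2)) :=
    trace_comp_comm' ξ (yI ∘ₗ j2)
  rw [comp_assoc] at h
  simp only [neg_comp, map_neg, comp_assoc]
  linear_combination -h

lemma framingB {Va Vb Wa Wb : Type*}
    [AddCommGroup Va] [Module ℂ Va] [FiniteDimensional ℂ Va]
    [AddCommGroup Vb] [Module ℂ Vb] [FiniteDimensional ℂ Vb]
    [AddCommGroup Wa] [Module ℂ Wa] [FiniteDimensional ℂ Wa]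
    [AddCommGroup Wb] [Module ℂ Wb] [FiniteDimensional ℂ Wb]
    (η : Vb →ₗ[ℂ] Va) (i2 : Wb →ₗ[ℂ] Vb) (j1 : Va →ₗ[ℂ] Wa)
    (xI : Wa →ₗ[ℂ] Vb) (xJ : Va →ₗ[ℂ] Wb) :
    LinearMap.trace ℂ Vb (xI ∘ₗ (j1 ∘ₗ η)) - LinearMap.trace ℂ Va ((-(η ∘ₗ i2)) ∘ₗ xJ)
    = LinearMap.trace ℂ Va (η ∘ₗ (i2 ∘ₗ xJ)) + LinearMap.trace ℂ Va (η ∘ₗ (xI ∘ₗ j1)) := by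
  have h1 : LinearMap.trace ℂ Vb (xI ∘ₗ (j1 ∘ₗ η)) = LinearMap.trace ℂ Va (η ∘ₗ (xI ∘ₗ j1)) :=
    (trace_comp_cycle j1 xI η).trans (trace_comp_cycle η j1 xI)
  simp only [neg_comp, map_neg, comp_assoc, sub_neg_eq_add]
  linear_combination h1

end AuxDuality2

section AuxDuality3

open LinearMap

variable {s t : Ω → I}
variable {V₁ W₁ V₂ W₂ : I → Type*}
  [∀ k, AddCommGroup (V₁ k)] [∀ k, Module ℂ (V₁ k)]
  [∀ k, AddCommGroup (W₁ k)] [∀ k, Module ℂ (W₁ k)]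
  [∀ k, AddCommGroup (V₂ k)] [∀ k, Module ℂ (V₂ k)]
  [∀ k, AddCommGroup (W₂ k)] [∀ k, Module ℂ (W₂ k)]

set_option linter.unusedSectionVars false

lemma trace_betaMap [Fintype Ω] [Fintype I] [DecidableEq I] (eps : Ω → ℂ)
    (Ra : FramedRep s t V₁ W₁) (Rb : FramedRep s t V₂ W₂)
    (x : ELL s t V₁ W₁ V₂ W₂) (ζ : ∀ k, V₂ k →ₗ[ℂ] V₁ k) :
    ∑ k, LinearMap.trace ℂ (V₁ k) (ζ k ∘ₗ betaMap eps Ra Rb x k)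
      = (∑ e : Ω, eps e * LinearMap.trace ℂ (V₁ (t e))
          (ζ (t e) ∘ₗ (Rb.Bp e ∘ₗ x.2.1 e + x.1 e ∘ₗ Ra.Bm e)))
      + (∑ e : Ω, (-eps e) * LinearMap.trace ℂ (V₁ (s e))
          (ζ (s e) ∘ₗ (Rb.Bm e ∘ₗ x.1 e + x.2.1 e ∘ₗ Ra.Bp e)))
      + ∑ k, (LinearMap.trace ℂ (V₁ k) (ζ k ∘ₗ (Rb.i k ∘ₗ x.2.2.2 k))
            + LinearMap.trace ℂ (V₁ k) (ζ k ∘ₗ (x.2.2.1 k ∘ₗ Ra.j k))) := by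
  have step : ∀ k, LinearMap.trace ℂ (V₁ k) (ζ k ∘ₗ betaMap eps Ra Rb x k)
      = (∑ e : {e : Ω // t e = k}, eps e.1 * LinearMap.trace ℂ (V₁ (t e.1))
            (ζ (t e.1) ∘ₗ (Rb.Bp e.1 ∘ₗ x.2.1 e.1 + x.1 e.1 ∘ₗ Ra.Bm e.1)))
        + (∑ e : {e : Ω // s e = k}, (-eps e.1) * LinearMap.trace ℂ (V₁ (s e.1))
            (ζ (s e.1) ∘ₗ (Rb.Bm e.1 ∘ₗ x.1 e.1 + x.2.1 e.1 ∘ₗ Ra.Bp e.1)))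
        + (LinearMap.trace ℂ (V₁ k) (ζ k ∘ₗ (Rb.i k ∘ₗ x.2.2.2 k))
            + LinearMap.trace ℂ (V₁ k) (ζ k ∘ₗ (x.2.2.1 k ∘ₗ Ra.j k))) := by
    intro k
    rw [show LinearMap.trace ℂ (V₁ k) (ζ k ∘ₗ betaMap eps Ra Rb x k)
          = trL (ζ k) (betaMap eps Ra Rb x k) from rfl, betaMap,
        map_add, map_add, map_add, map_sum, map_sum, add_assoc]
    congr 1
    congr 1
    · refine Finset.sum_congr rfl fun e _ => ?_
      obtain ⟨e, he⟩ := e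
      subst he
      rw [map_smul, smul_eq_mul]
      congr 1
    · refine Finset.sum_congr rfl fun e _ => ?_
      obtain ⟨e, he⟩ := e
      subst he
      rw [map_smul, smul_eq_mul]
      congr 1
  simp only [step]
  rw [Finset.sum_add_distrib, Finset.sum_add_distrib,
    Fintype.sum_fiberwise t (fun e => eps e * LinearMap.trace ℂ (V₁ (t e))
      (ζ (t e) ∘ₗ (Rb.Bp e ∘ₗ x.2.1 e + x.1 e ∘ₗ Ra.Bm e))),
    Fintype.sum_fiberwise s (fun e => (-eps e) * LinearMap.trace ℂ (V₁ (s e))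
      (ζ (s e) ∘ₗ (Rb.Bm e ∘ₗ x.1 e + x.2.1 e ∘ₗ Ra.Bp e)))]

end AuxDuality3

section AuxDuality4

open LinearMap

variable {s t : Ω → I}
variable {V₁ W₁ V₂ W₂ : I → Type*}
  [∀ k, AddCommGroup (V₁ k)] [∀ k, Module ℂ (V₁ k)] [∀ k, FiniteDimensional ℂ (V₁ k)]
  [∀ k, AddCommGroup (W₁ k)] [∀ k, Module ℂ (W₁ k)] [∀ k, FiniteDimensional ℂ (W₁ k)]
  [∀ k, AddCommGroup (V₂ k)] [∀ k, Module ℂ (V₂ k)] [∀ k, FiniteDimensional ℂ (V₂ k)]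
  [∀ k, AddCommGroup (W₂ k)] [∀ k, Module ℂ (W₂ k)] [∀ k, FiniteDimensional ℂ (W₂ k)]

set_option linter.unusedSectionVars false

lemma omega_alpha [Fintype Ω] [Fintype I] [DecidableEq I] (eps : Ω → ℂ)
    (R₁ : FramedRep s t V₁ W₁) (R₂ : FramedRep s t V₂ W₂)
    (ξ : ∀ k, V₁ k →ₗ[ℂ] V₂ k) (y : ELL s t V₂ W₂ V₁ W₁) :
    omegaForm eps (alphaMap R₁ R₂ ξ) y
      = -∑ k, LinearMap.trace ℂ (V₂ k) (ξ k ∘ₗ betaMap eps R₂ R₁ y k) := by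
  rw [trace_betaMap, omegaForm]
  dsimp only [alphaMap]
  rw [neg_add, neg_add, ← Finset.sum_neg_distrib, ← Finset.sum_neg_distrib,
    ← Finset.sum_neg_distrib, ← Finset.sum_add_distrib, ← Finset.sum_add_distrib]
  congr 1
  · exact Finset.sum_congr rfl fun e _ =>
      edgeA (eps e) (ξ (s e)) (ξ (t e)) (R₁.Bp e) (R₁.Bm e) (R₂.Bp e) (R₂.Bm e)
        (y.1 e) (y.2.1 e)
  · exact Finset.sum_congr rfl fun k _ =>
      framingA (ξ k) (R₁.i k) (R₂.j k) (y.2.2.1 k) (y.2.2.2 k)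

lemma omega_alpha' [Fintype Ω] [Fintype I] [DecidableEq I] (eps : Ω → ℂ)
    (R₁ : FramedRep s t V₁ W₁) (R₂ : FramedRep s t V₂ W₂)
    (x : ELL s t V₁ W₁ V₂ W₂) (η : ∀ k, V₂ k →ₗ[ℂ] V₁ k) :
    omegaForm eps x (alphaMap R₂ R₁ η)
      = ∑ k, LinearMap.trace ℂ (V₁ k) (η k ∘ₗ betaMap eps R₁ R₂ x k) := by
  rw [trace_betaMap, omegaForm]
  dsimp only [alphaMap]
  rw [← Finset.sum_add_distrib, ← Finset.sum_add_distrib]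
  congr 1
  · exact Finset.sum_congr rfl fun e _ =>
      edgeB (eps e) (η (s e)) (η (t e)) (R₁.Bp e) (R₁.Bm e) (R₂.Bp e) (R₂.Bm e)
        (x.1 e) (x.2.1 e)
  · exact Finset.sum_congr rfl fun k _ =>
      framingB (η k) (R₂.i k) (R₁.j k) (x.2.2.1 k) (x.2.2.2 k)

end AuxDuality4

section AuxDuality5

open LinearMap

variable {s t : Ω → I}
variable {V₁ W₁ V₂ W₂ : I → Type*}
  [∀ k, AddCommGroup (V₁ k)] [∀ k, Module ℂ (V₁ k)] [∀ k, FiniteDimensional ℂ (V₁ k)]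
  [∀ k, AddCommGroup (W₁ k)] [∀ k, Module ℂ (W₁ k)] [∀ k, FiniteDimensional ℂ (W₁ k)]
  [∀ k, AddCommGroup (V₂ k)] [∀ k, Module ℂ (V₂ k)] [∀ k, FiniteDimensional ℂ (V₂ k)]
  [∀ k, AddCommGroup (W₂ k)] [∀ k, Module ℂ (W₂ k)] [∀ k, FiniteDimensional ℂ (W₂ k)]

set_option linter.unusedSectionVars false

/-- `alphaMap` as a linear map. -/
def alphaLin (R₁ : FramedRep s t V₁ W₁) (R₂ : FramedRep s t V₂ W₂) :
    (∀ k, V₁ k →ₗ[ℂ] V₂ k) →ₗ[ℂ] ELL s t V₁ W₁ V₂ W₂ where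
  toFun := alphaMap R₁ R₂
  map_add' ξ ζ := by
    dsimp only [alphaMap]
    simp only [Prod.mk_add_mk, Prod.mk.injEq]
    refine ⟨funext fun e => ?_, funext fun e => ?_, funext fun k => ?_, funext fun k => ?_⟩ <;>
      simp only [Pi.add_apply, comp_add, add_comp] <;> abel
  map_smul' c ξ := by
    dsimp only [alphaMap]
    simp only [Prod.smul_mk, RingHom.id_apply, Prod.mk.injEq]
    refine ⟨funext fun e => ?_, funext fun e => ?_, funext fun k => ?_, funext fun k => ?_⟩ <;>
      simp only [Pi.smul_apply, comp_smul, smul_comp, smul_sub, smul_neg]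

@[simp] lemma alphaLin_apply (R₁ : FramedRep s t V₁ W₁) (R₂ : FramedRep s t V₂ W₂)
    (ξ : ∀ k, V₁ k →ₗ[ℂ] V₂ k) : alphaLin R₁ R₂ ξ = alphaMap R₁ R₂ ξ := rfl

/-- `omegaForm` as a bilinear map. -/
def omegaLin [Fintype Ω] [Fintype I] (eps : Ω → ℂ) :
    ELL s t V₁ W₁ V₂ W₂ →ₗ[ℂ] ELL s t V₂ W₂ V₁ W₁ →ₗ[ℂ] ℂ :=
  LinearMap.mk₂ ℂ (omegaForm eps)
    (fun x x' y => by
      simp only [omegaForm, Prod.fst_add, Prod.snd_add, Pi.add_apply, add_comp, comp_add,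
        map_add, mul_add, sub_eq_add_neg, neg_add, Finset.sum_add_distrib]
      try ring
      )
    (fun c x y => by
      simp only [omegaForm, Prod.smul_fst, Prod.smul_snd, Pi.smul_apply, smul_comp, comp_smul,
        map_smul, smul_eq_mul, sub_eq_add_neg, mul_add, mul_neg, Finset.mul_sum,
        Finset.sum_add_distrib, Finset.sum_neg_distrib, mul_comm, mul_left_comm]
      try ring
      )
    (fun x y y' => by
      simp only [omegaForm, Prod.fst_add, Prod.snd_add, Pi.add_apply, add_comp, comp_add,
        map_add, mul_add, sub_eq_add_neg, neg_add, Finset.sum_add_distrib]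
      try ring
      )
    (fun c x y => by
      simp only [omegaForm, Prod.smul_fst, Prod.smul_snd, Pi.smul_apply, smul_comp, comp_smul,
        map_smul, smul_eq_mul, sub_eq_add_neg, mul_add, mul_neg, Finset.mul_sum,
        Finset.sum_add_distrib, Finset.sum_neg_distrib, mul_comm, mul_left_comm]
      try ring
      )

@[simp] lemma omegaLin_apply [Fintype Ω] [Fintype I] (eps : Ω → ℂ)
    (x : ELL s t V₁ W₁ V₂ W₂) (y : ELL s t V₂ W₂ V₁ W₁) :
    omegaLin eps x y = omegaForm eps x y := rfl

end AuxDuality5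

section AuxDuality6

open LinearMap

variable {s t : Ω → I}
variable {V₁ W₁ V₂ W₂ : I → Type*}
  [∀ k, AddCommGroup (V₁ k)] [∀ k, Module ℂ (V₁ k)] [∀ k, FiniteDimensional ℂ (V₁ k)]
  [∀ k, AddCommGroup (W₁ k)] [∀ k, Module ℂ (W₁ k)] [∀ k, FiniteDimensional ℂ (W₁ k)]
  [∀ k, AddCommGroup (V₂ k)] [∀ k, Module ℂ (V₂ k)] [∀ k, FiniteDimensional ℂ (V₂ k)]
  [∀ k, AddCommGroup (W₂ k)] [∀ k, Module ℂ (W₂ k)] [∀ k, FiniteDimensional ℂ (W₂ k)]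

set_option linter.unusedSectionVars false

lemma omega_right_nondeg [Fintype Ω] [Fintype I] [DecidableEq I]
    (eps : Ω → ℂ) (heps : ∀ e, eps e ≠ 0) (y : ELL s t V₂ W₂ V₁ W₁)
    (h : ∀ x : ELL s t V₁ W₁ V₂ W₂, omegaForm eps x y = 0) : y = 0 := by
  classical
  obtain ⟨y1, y2, y3, y4⟩ := y
  simp only [Prod.mk_eq_zero]
  refine ⟨?_, ?_, ?_, ?_⟩
  · funext e₀
    show y1 e₀ = (0 : _)
    apply trace_comp_eq_zero_left
    intro f
    have hx := h (0, Function.update 0 e₀ f, 0, 0)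
    rw [omegaForm] at hx
    simp only [Pi.zero_apply, zero_comp, comp_zero, map_zero, mul_zero, sub_zero,
      Finset.sum_const_zero, add_zero, zero_add, sub_self] at hx
    rw [Finset.sum_eq_single e₀ (fun b _ hb => by rw [Function.update_of_ne hb]; simp)
      (by simp), Function.update_self] at hx
    rcases mul_eq_zero.mp hx with h' | h'
    · exact absurd h' (neg_ne_zero.mpr (heps e₀))
    · exact h'
  · funext e₀
    show y2 e₀ = (0 : _)
    apply trace_comp_eq_zero_left
    intro f
    have hx := h (Function.update 0 e₀ f, 0, 0, 0)
    rw [omegaForm] at hx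
    simp only [Pi.zero_apply, zero_comp, comp_zero, map_zero, mul_zero, sub_zero,
      Finset.sum_const_zero, add_zero, zero_add, sub_self] at hx
    rw [Finset.sum_eq_single e₀ (fun b _ hb => by rw [Function.update_of_ne hb]; simp)
      (by simp), Function.update_self] at hx
    rcases mul_eq_zero.mp hx with h' | h'
    · exact absurd h' (heps e₀)
    · exact h'
  · funext k₀
    show y3 k₀ = (0 : _)
    apply trace_comp_eq_zero_right
    intro f
    have hx := h (0, 0, 0, Function.update 0 k₀ f)
    rw [omegaForm] at hx
    simp only [Pi.zero_apply, zero_comp, comp_zero, map_zero, mul_zero, zero_sub,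
      Finset.sum_const_zero, add_zero, zero_add] at hx
    rw [Finset.sum_eq_single k₀ (fun b _ hb => by rw [Function.update_of_ne hb]; simp)
      (by simp), Function.update_self] at hx
    exact neg_eq_zero.mp hx
  · funext k₀
    show y4 k₀ = (0 : _)
    apply trace_comp_eq_zero_left
    intro f
    have hx := h (0, 0, Function.update 0 k₀ f, 0)
    rw [omegaForm] at hx
    simp only [Pi.zero_apply, zero_comp, comp_zero, map_zero, mul_zero, sub_zero,
      Finset.sum_const_zero, add_zero, zero_add] at hx
    rw [Finset.sum_eq_single k₀ (fun b _ hb => by rw [Function.update_of_ne hb]; simp)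
      (by simp), Function.update_self] at hx
    exact hx

end AuxDuality6

section AuxDuality7

open LinearMap

variable {s t : Ω → I}
variable {V₁ W₁ V₂ W₂ : I → Type*}
  [∀ k, AddCommGroup (V₁ k)] [∀ k, Module ℂ (V₁ k)] [∀ k, FiniteDimensional ℂ (V₁ k)]
  [∀ k, AddCommGroup (W₁ k)] [∀ k, Module ℂ (W₁ k)] [∀ k, FiniteDimensional ℂ (W₁ k)]
  [∀ k, AddCommGroup (V₂ k)] [∀ k, Module ℂ (V₂ k)] [∀ k, FiniteDimensional ℂ (V₂ k)]
  [∀ k, AddCommGroup (W₂ k)] [∀ k, Module ℂ (W₂ k)] [∀ k, FiniteDimensional ℂ (W₂ k)]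

set_option linter.unusedSectionVars false

lemma omega_left_nondeg [Fintype Ω] [Fintype I] [DecidableEq I]
    (eps : Ω → ℂ) (heps : ∀ e, eps e ≠ 0) (x : ELL s t V₁ W₁ V₂ W₂)
    (h : ∀ y : ELL s t V₂ W₂ V₁ W₁, omegaForm eps x y = 0) : x = 0 := by
  classical
  obtain ⟨x1, x2, x3, x4⟩ := x
  simp only [Prod.mk_eq_zero]
  refine ⟨?_, ?_, ?_, ?_⟩
  · funext e₀
    show x1 e₀ = (0 : _)
    apply trace_comp_eq_zero_right
    intro f
    have hy := h (0, Function.update 0 e₀ f, 0, 0)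
    rw [omegaForm] at hy
    simp only [Pi.zero_apply, zero_comp, comp_zero, map_zero, mul_zero, sub_zero,
      Finset.sum_const_zero, add_zero, zero_add, sub_self] at hy
    rw [Finset.sum_eq_single e₀ (fun b _ hb => by rw [Function.update_of_ne hb]; simp)
      (by simp), Function.update_self] at hy
    rcases mul_eq_zero.mp hy with h' | h'
    · exact absurd h' (heps e₀)
    · exact h'
  · funext e₀
    show x2 e₀ = (0 : _)
    apply trace_comp_eq_zero_right
    intro f
    have hy := h (Function.update 0 e₀ f, 0, 0, 0)
    rw [omegaForm] at hy
    simp only [Pi.zero_apply, zero_comp, comp_zero, map_zero, mul_zero, sub_zero,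
      Finset.sum_const_zero, add_zero, zero_add, sub_self] at hy
    rw [Finset.sum_eq_single e₀ (fun b _ hb => by rw [Function.update_of_ne hb]; simp)
      (by simp), Function.update_self] at hy
    rcases mul_eq_zero.mp hy with h' | h'
    · exact absurd h' (neg_ne_zero.mpr (heps e₀))
    · exact h'
  · funext k₀
    show x3 k₀ = (0 : _)
    apply trace_comp_eq_zero_right
    intro f
    have hy := h (0, 0, 0, Function.update 0 k₀ f)
    rw [omegaForm] at hy
    simp only [Pi.zero_apply, zero_comp, comp_zero, map_zero, mul_zero, sub_zero,
      Finset.sum_const_zero, add_zero, zero_add] at hy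
    rw [Finset.sum_eq_single k₀ (fun b _ hb => by rw [Function.update_of_ne hb]; simp)
      (by simp), Function.update_self] at hy
    exact hy
  · funext k₀
    show x4 k₀ = (0 : _)
    apply trace_comp_eq_zero_left
    intro f
    have hy := h (0, 0, Function.update 0 k₀ f, 0)
    rw [omegaForm] at hy
    simp only [Pi.zero_apply, zero_comp, comp_zero, map_zero, mul_zero, zero_sub,
      Finset.sum_const_zero, add_zero, zero_add] at hy
    rw [Finset.sum_eq_single k₀ (fun b _ hb => by rw [Function.update_of_ne hb]; simp)
      (by simp), Function.update_self] at hy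
    exact neg_eq_zero.mp hy

lemma finrank_ELL_symm [Fintype Ω] [Fintype I] :
    Module.finrank ℂ (ELL s t V₂ W₂ V₁ W₁) = Module.finrank ℂ (ELL s t V₁ W₁ V₂ W₂) := by
  simp only [ELL, Module.finrank_prod, Module.finrank_pi_fintype, Module.finrank_linearMap]
  simp only [mul_comm]
  ring

end AuxDuality7

section AuxDuality8

open LinearMap

variable {s t : Ω → I}
variable {V₁ W₁ V₂ W₂ : I → Type*}
  [∀ k, AddCommGroup (V₁ k)] [∀ k, Module ℂ (V₁ k)] [∀ k, FiniteDimensional ℂ (V₁ k)]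
  [∀ k, AddCommGroup (W₁ k)] [∀ k, Module ℂ (W₁ k)] [∀ k, FiniteDimensional ℂ (W₁ k)]
  [∀ k, AddCommGroup (V₂ k)] [∀ k, Module ℂ (V₂ k)] [∀ k, FiniteDimensional ℂ (V₂ k)]
  [∀ k, AddCommGroup (W₂ k)] [∀ k, Module ℂ (W₂ k)] [∀ k, FiniteDimensional ℂ (W₂ k)]

set_option linter.unusedSectionVars false

lemma omega_flip_surjective [Fintype Ω] [Fintype I] [DecidableEq I]
    (eps : Ω → ℂ) (heps : ∀ e, eps e ≠ 0) :
    Function.Surjective ((omegaLin eps).flip :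
      ELL s t V₂ W₂ V₁ W₁ →ₗ[ℂ] (ELL s t V₁ W₁ V₂ W₂ →ₗ[ℂ] ℂ)) := by
  have hdim : Module.finrank ℂ (ELL s t V₂ W₂ V₁ W₁)
      = Module.finrank ℂ (ELL s t V₁ W₁ V₂ W₂ →ₗ[ℂ] ℂ) := by
    rw [Module.finrank_linearMap, Module.finrank_self, mul_one]
    exact finrank_ELL_symm
  refine (LinearMap.injective_iff_surjective_of_finrank_eq_finrank hdim).mp ?_
  rw [← LinearMap.ker_eq_bot, LinearMap.ker_eq_bot']
  intro y hy
  refine omega_right_nondeg eps heps y fun x => ?_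
  calc omegaForm eps x y = ((omegaLin eps).flip y) x := rfl
    _ = 0 := by rw [hy]; rfl

lemma omega_surjective [Fintype Ω] [Fintype I] [DecidableEq I]
    (eps : Ω → ℂ) (heps : ∀ e, eps e ≠ 0) :
    Function.Surjective ((omegaLin eps) :
      ELL s t V₁ W₁ V₂ W₂ →ₗ[ℂ] (ELL s t V₂ W₂ V₁ W₁ →ₗ[ℂ] ℂ)) := by
  have hdim : Module.finrank ℂ (ELL s t V₁ W₁ V₂ W₂)
      = Module.finrank ℂ (ELL s t V₂ W₂ V₁ W₁ →ₗ[ℂ] ℂ) := by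
    rw [Module.finrank_linearMap, Module.finrank_self, mul_one]
    exact finrank_ELL_symm.symm
  refine (LinearMap.injective_iff_surjective_of_finrank_eq_finrank hdim).mp ?_
  rw [← LinearMap.ker_eq_bot, LinearMap.ker_eq_bot']
  intro x hx
  refine omega_left_nondeg eps heps x fun y => ?_
  calc omegaForm eps x y = (omegaLin eps x) y := rfl
    _ = 0 := by rw [hx]; rfl

end AuxDuality8

/-- for framed representations with `μ = 0`, the pairing `ω`
vanishes on `Im α²¹ × Ker β¹²` and on `Ker β²¹ × Im α¹²`, and the induced
pairing `(Ker β²¹/Im α²¹) × (Ker β¹²/Im α¹²) → ℂ` is nondegenerate: the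
quotients `Ker β²¹/Im α²¹` and `Ker β¹²/Im α¹²` are dual to each other with
respect to `ω`. -/
theorem omega_duality [Fintype I] [Fintype Ω] [DecidableEq I]
    {s t : Ω → I} (hloop : ∀ e, s e ≠ t e)
    (eps : Ω → ℂ) (heps : ∀ e, eps e ≠ 0)
    {V₁ W₁ V₂ W₂ : I → Type*}
    [∀ k, AddCommGroup (V₁ k)] [∀ k, Module ℂ (V₁ k)]
    [∀ k, FiniteDimensional ℂ (V₁ k)]
    [∀ k, AddCommGroup (W₁ k)] [∀ k, Module ℂ (W₁ k)]
    [∀ k, FiniteDimensional ℂ (W₁ k)]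
    [∀ k, AddCommGroup (V₂ k)] [∀ k, Module ℂ (V₂ k)]
    [∀ k, FiniteDimensional ℂ (V₂ k)]
    [∀ k, AddCommGroup (W₂ k)] [∀ k, Module ℂ (W₂ k)]
    [∀ k, FiniteDimensional ℂ (W₂ k)]
    (R₁ : FramedRep s t V₁ W₁) (R₂ : FramedRep s t V₂ W₂)
    (hμ₁ : R₁.MuZero eps) (hμ₂ : R₂.MuZero eps) :
    (∀ (ξ : ∀ k, V₁ k →ₗ[ℂ] V₂ k) (y : ELL s t V₂ W₂ V₁ W₁),
      (∀ k, betaMap eps R₂ R₁ y k = 0) →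
      omegaForm eps (alphaMap R₁ R₂ ξ) y = 0) ∧
    (∀ (x : ELL s t V₁ W₁ V₂ W₂) (η : ∀ k, V₂ k →ₗ[ℂ] V₁ k),
      (∀ k, betaMap eps R₁ R₂ x k = 0) →
      omegaForm eps x (alphaMap R₂ R₁ η) = 0) ∧
    (∀ x : ELL s t V₁ W₁ V₂ W₂, (∀ k, betaMap eps R₁ R₂ x k = 0) →
      (∀ y : ELL s t V₂ W₂ V₁ W₁, (∀ k, betaMap eps R₂ R₁ y k = 0) →
        omegaForm eps x y = 0) →
      ∃ ξ : ∀ k, V₁ k →ₗ[ℂ] V₂ k, x = alphaMap R₁ R₂ ξ) ∧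
    (∀ y : ELL s t V₂ W₂ V₁ W₁, (∀ k, betaMap eps R₂ R₁ y k = 0) →
      (∀ x : ELL s t V₁ W₁ V₂ W₂, (∀ k, betaMap eps R₁ R₂ x k = 0) →
        omegaForm eps x y = 0) →
      ∃ η : ∀ k, V₂ k →ₗ[ℂ] V₁ k, y = alphaMap R₂ R₁ η) := by
  
  classical
  refine ⟨?_, ?_, ?_, ?_⟩
  · intro ξ y hy
    rw [omega_alpha eps R₁ R₂ ξ y]
    simp [hy]
  · intro x η hx
    rw [omega_alpha' eps R₁ R₂ x η]
    simp [hx]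
  · intro x hx hperp
    have key : x ∈ LinearMap.range (alphaLin R₁ R₂) := by
      rw [← Subspace.forall_mem_dualAnnihilator_apply_eq_zero_iff]
      intro φ hφ
      obtain ⟨y₀, hy₀⟩ := omega_flip_surjective eps heps φ
      have hωα : ∀ ξ : ∀ k, V₁ k →ₗ[ℂ] V₂ k,
          omegaForm eps (alphaMap R₁ R₂ ξ) y₀ = 0 := by
        intro ξ
        have hmem := ((Submodule.mem_dualAnnihilator φ).mp hφ) (alphaMap R₁ R₂ ξ) ⟨ξ, rfl⟩
        calc omegaForm eps (alphaMap R₁ R₂ ξ) y₀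
            = ((omegaLin eps).flip y₀) (alphaMap R₁ R₂ ξ) := rfl
          _ = φ (alphaMap R₁ R₂ ξ) := by rw [hy₀]
          _ = 0 := hmem
      have hb : ∀ k, betaMap eps R₂ R₁ y₀ k = 0 := by
        apply pi_trace_nondeg
        intro ξ
        have h0 := hωα ξ
        rw [omega_alpha] at h0
        exact neg_eq_zero.mp h0
      calc φ x = ((omegaLin eps).flip y₀) x := by rw [hy₀]
        _ = omegaForm eps x y₀ := rfl
        _ = 0 := hperp y₀ hb
    obtain ⟨ξ, hξ⟩ := key
    exact ⟨ξ, hξ.symm⟩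
  · intro y hy hperp
    have key : y ∈ LinearMap.range (alphaLin R₂ R₁) := by
      rw [← Subspace.forall_mem_dualAnnihilator_apply_eq_zero_iff]
      intro φ hφ
      obtain ⟨x₀, hx₀⟩ := omega_surjective eps heps φ
      have hωα : ∀ η : ∀ k, V₂ k →ₗ[ℂ] V₁ k,
          omegaForm eps x₀ (alphaMap R₂ R₁ η) = 0 := by
        intro η
        have hmem := ((Submodule.mem_dualAnnihilator φ).mp hφ) (alphaMap R₂ R₁ η) ⟨η, rfl⟩
        calc omegaForm eps x₀ (alphaMap R₂ R₁ η)
            = (omegaLin eps x₀) (alphaMap R₂ R₁ η) := rfl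
          _ = φ (alphaMap R₂ R₁ η) := by rw [hx₀]
          _ = 0 := hmem
      have hb : ∀ k, betaMap eps R₁ R₂ x₀ k = 0 := by
        apply pi_trace_nondeg
        intro η
        have h0 := hωα η
        rw [omega_alpha'] at h0
        exact h0
      calc φ y = (omegaLin eps x₀) y := by rw [hx₀]
        _ = omegaForm eps x₀ y := rfl
        _ = 0 := hperp x₀ hb
    obtain ⟨η, hη⟩ := key
    exact ⟨η, hη.symm⟩
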